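/- The pointwise maximum of two step-valued component functions is not additively decomposable: let s, t : ℝ → ℝ be functions for which there exist points x₀, x₁, y₀, y₁ ∈ ℝ with t(y₀) ≤ s(x₀) < s(x₁) ≤ t(y₁). Then there exist no functions u, v : ℝ → ℝ such that max(s(x), t(y)) = u(x) + v(y) for all x, y ∈ ℝ. -/
import Mathlib

/-- The pointwise maximum of two step-valued component functions is not additively
decomposable: if `s, t : ℝ → ℝ` admit points with `t(y₀) ≤ s(x₀) < s(x₁) ≤ t(y₁)`,
then there are no univariate functions `u, v : ℝ → ℝ` with
`max(s(x), t(y)) = u(x) + v(y)` for all `x, y`. -/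
theorem max_not_additively_decomposable (s t : ℝ → ℝ)
    (x₀ x₁ y₀ y₁ : ℝ)
    (h₀ : t y₀ ≤ s x₀) (h₁ : s x₀ < s x₁) (h₂ : s x₁ ≤ t y₁) :
    ¬ ∃ u v : ℝ → ℝ, ∀ x y : ℝ, max (s x) (t y) = u x + v y := by
  rintro ⟨u, v, h⟩
  have a := h x₀ y₀
  have b := h x₁ y₀
  have c := h x₀ y₁
  have d := h x₁ y₁
  rw [max_eq_left h₀] at a
  rw [max_eq_left (h₀.trans h₁.le)] at b
  rw [max_eq_right (h₁.le.trans h₂)] at c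
  rw [max_eq_right h₂] at d
  linarith
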